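/- Let 𝒢(A) be the group presented by generators σ₁,…,σₙ subject to the relations σ_ℓσ_i = σ_iσ_ℓ^{(-1)^{A^i_ℓ}} for all i < ℓ (that is, σ_ℓσ_i = σ_iσ_ℓ⁻¹ if A^i_ℓ = 1 and σ_ℓσ_i = σ_iσ_ℓ if A^i_ℓ = 0). Then the homomorphism ψ : 𝒢(A) → Γ(A) defined by ψ(σ_j) = s_j for j = 1,…,n is a group isomorphism. -/

import Mathlib

noncomputable def bottMotion {n : ℕ} (A : Matrix (Fin n) (Fin n) (ZMod 2)) (i : Fin n) :
    Equiv.Perm (Fin n → ℝ) where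
  toFun u := fun j => (-1 : ℝ) ^ (A i j).val * u j + if j = i then 2⁻¹ else 0
  invFun v := fun j => (-1 : ℝ) ^ (A i j).val * (v j - if j = i then 2⁻¹ else 0)
  left_inv u := by
    funext j
    have h : ((-1 : ℝ) ^ (A i j).val) * ((-1 : ℝ) ^ (A i j).val) = 1 := by
      rw [← pow_add]
      exact Even.neg_one_pow ⟨(A i j).val, rfl⟩
    dsimp only
    rw [add_sub_cancel_right, ← mul_assoc, h, one_mul]
  right_inv v := by
    funext j
    have h : ((-1 : ℝ) ^ (A i j).val) * ((-1 : ℝ) ^ (A i j).val) = 1 := by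
      rw [← pow_add]
      exact Even.neg_one_pow ⟨(A i j).val, rfl⟩
    dsimp only
    rw [← mul_assoc, h, one_mul, sub_add_cancel]

noncomputable def bottGroup {n : ℕ} (A : Matrix (Fin n) (Fin n) (ZMod 2)) :
    Subgroup (Equiv.Perm (Fin n → ℝ)) :=
  Subgroup.closure (Set.range (bottMotion A))

/-- The relations σ_ℓ σ_i = σ_i σ_ℓ^{(-1)^{A^i_ℓ}} for i < ℓ, written as words
(lhs · rhs⁻¹) in the free group on n generators. -/
noncomputable def bottRels {n : ℕ} (A : Matrix (Fin n) (Fin n) (ZMod 2)) :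
    Set (FreeGroup (Fin n)) :=
  {r | ∃ i ℓ : Fin n, i < ℓ ∧
    r = (FreeGroup.of ℓ * FreeGroup.of i) *
      (FreeGroup.of i * FreeGroup.of ℓ ^ ((((-1 : ℤˣ) ^ (A i ℓ).val) : ℤˣ) : ℤ))⁻¹}

/- ### Auxiliary lemmas -/

private lemma bott_rel {n : ℕ} (A : Matrix (Fin n) (Fin n) (ZMod 2)) {i ℓ : Fin n} (h : i < ℓ) :
    (PresentedGroup.of ℓ * PresentedGroup.of i : PresentedGroup (bottRels A)) =
      PresentedGroup.of i *
        PresentedGroup.of ℓ ^ ((((-1 : ℤˣ) ^ (A i ℓ).val) : ℤˣ) : ℤ) := by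
  have hr : (FreeGroup.of ℓ * FreeGroup.of i) *
      (FreeGroup.of i * FreeGroup.of ℓ ^ ((((-1 : ℤˣ) ^ (A i ℓ).val) : ℤˣ) : ℤ))⁻¹
      ∈ bottRels A := ⟨i, ℓ, h, rfl⟩
  have h1 : PresentedGroup.mk (bottRels A) ((FreeGroup.of ℓ * FreeGroup.of i) *
      (FreeGroup.of i * FreeGroup.of ℓ ^ ((((-1 : ℤˣ) ^ (A i ℓ).val) : ℤˣ) : ℤ))⁻¹) = 1 :=
    (QuotientGroup.eq_one_iff _).mpr (Subgroup.subset_normalClosure hr)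
  simp only [map_mul, map_inv, map_zpow] at h1
  rwa [mul_inv_eq_one] at h1

private lemma bott_swap {n : ℕ} (A : Matrix (Fin n) (Fin n) (ZMod 2)) {i ℓ : Fin n}
    (h : i < ℓ) (c : ℤ) :
    ∃ ε : ℤˣ, ∀ a : ℤ,
      (PresentedGroup.of ℓ : PresentedGroup (bottRels A)) ^ a * PresentedGroup.of i ^ c =
        PresentedGroup.of i ^ c * PresentedGroup.of ℓ ^ ((ε : ℤ) * a) := by
  set u : PresentedGroup (bottRels A) := PresentedGroup.of i with hu
  set v : PresentedGroup (bottRels A) := PresentedGroup.of ℓ with hv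
  set z : ℤˣ := (-1 : ℤˣ) ^ (A i ℓ).val with hzdef
  have hrel : v * u = u * v ^ (z : ℤ) := bott_rel A h
  have hzz : (z : ℤ) * (z : ℤ) = 1 := by
    rw [← Units.val_mul, Int.units_mul_self, Units.val_one]
  have h1 : u⁻¹ * v * u = v ^ (z : ℤ) := by
    rw [mul_assoc, hrel, ← mul_assoc, inv_mul_cancel, one_mul]
  have h2 : ∀ m : ℤ, u⁻¹ * v ^ m * u = v ^ ((z : ℤ) * m) := by
    intro m
    have hc := conj_zpow (i := m) (a := u⁻¹) (b := v)
    rw [inv_inv] at hc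
    rw [← hc, h1, ← zpow_mul]
  have key : ∀ m : ℤ, v ^ m * u = u * v ^ ((z : ℤ) * m) := by
    intro m; rw [← h2 m]; group
  have key' : ∀ m : ℤ, v ^ m * u⁻¹ = u⁻¹ * v ^ ((z : ℤ) * m) := by
    intro m
    have h3 := h2 ((z : ℤ) * m)
    rw [← mul_assoc (z : ℤ), hzz, one_mul] at h3
    rw [← h3]; group
  induction c using Int.induction_on with
  | zero => exact ⟨1, fun a => by simp⟩
  | succ c ih =>
      obtain ⟨ε, hε⟩ := ih
      refine ⟨z * ε, fun a => ?_⟩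
      rw [zpow_add_one u, ← mul_assoc, hε a, mul_assoc, key, ← mul_assoc, ← zpow_add_one]
      rw [Units.val_mul, mul_assoc]
  | pred c ih =>
      obtain ⟨ε, hε⟩ := ih
      refine ⟨z * ε, fun a => ?_⟩
      rw [zpow_sub_one u, ← mul_assoc, hε a, mul_assoc, key', ← mul_assoc, ← zpow_sub_one]
      rw [Units.val_mul, mul_assoc]

/-- Ordered products of powers of generators. -/
private noncomputable def NFL {n : ℕ} (A : Matrix (Fin n) (Fin n) (ZMod 2))
    (L : List (Fin n)) (k : Fin n → ℤ) : PresentedGroup (bottRels A) :=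
  (L.map fun j => (PresentedGroup.of j : PresentedGroup (bottRels A)) ^ k j).prod

private lemma NFL_nil {n : ℕ} (A : Matrix (Fin n) (Fin n) (ZMod 2)) (k : Fin n → ℤ) :
    NFL A [] k = 1 := rfl

private lemma NFL_cons {n : ℕ} (A : Matrix (Fin n) (Fin n) (ZMod 2)) (j : Fin n)
    (T : List (Fin n)) (k : Fin n → ℤ) :
    NFL A (j :: T) k = PresentedGroup.of j ^ k j * NFL A T k := by
  simp [NFL]

private lemma NFL_congr {n : ℕ} {A : Matrix (Fin n) (Fin n) (ZMod 2)} {L : List (Fin n)}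
    {k m : Fin n → ℤ} (h : ∀ j ∈ L, k j = m j) : NFL A L k = NFL A L m := by
  induction L with
  | nil => rfl
  | cons j T ih =>
      rw [NFL_cons, NFL_cons, h j List.mem_cons_self,
        ih fun x hx => h x (List.mem_cons_of_mem j hx)]

private lemma NFL_zero {n : ℕ} (A : Matrix (Fin n) (Fin n) (ZMod 2)) (L : List (Fin n)) :
    NFL A L (fun _ => 0) = 1 := by
  induction L with
  | nil => rfl
  | cons j T ih => rw [NFL_cons, ih, zpow_zero, one_mul]

private lemma NFL_push {n : ℕ} (A : Matrix (Fin n) (Fin n) (ZMod 2)) (i : Fin n) (c : ℤ) :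
    ∀ L : List (Fin n), List.Pairwise (· < ·) L → (∀ j ∈ L, i < j) → ∀ k : Fin n → ℤ,
      ∃ k', NFL A L k * PresentedGroup.of i ^ c = PresentedGroup.of i ^ c * NFL A L k'
  | [], _, _, k => ⟨k, by rw [NFL_nil, one_mul, mul_one]⟩
  | j :: T, hp, hgt, k => by
      obtain ⟨k', hk'⟩ := NFL_push A i c T hp.of_cons
        (fun m hm => hgt m (List.mem_cons_of_mem j hm)) k
      obtain ⟨ε, hε⟩ := bott_swap A (hgt j List.mem_cons_self) c
      have hjT : j ∉ T := fun hm => lt_irrefl j ((List.pairwise_cons.mp hp).1 j hm)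
      refine ⟨Function.update k' j ((ε : ℤ) * k j), ?_⟩
      rw [NFL_cons, mul_assoc, hk', ← mul_assoc, hε (k j), mul_assoc, NFL_cons,
        Function.update_self]
      congr 2
      exact NFL_congr fun x hx => (Function.update_of_ne (fun hxj => hjT (by rwa [hxj] at hx)) _ _).symm

private lemma NFL_step {n : ℕ} (A : Matrix (Fin n) (Fin n) (ZMod 2)) (i : Fin n) (c : ℤ) :
    ∀ L : List (Fin n), List.Pairwise (· < ·) L → i ∈ L → ∀ k : Fin n → ℤ,
      ∃ k', NFL A L k * PresentedGroup.of i ^ c = NFL A L k'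
  | [], _, hi, _ => absurd hi List.not_mem_nil
  | j :: T, hp, hi, k => by
      have hjT : j ∉ T := fun hm => lt_irrefl j ((List.pairwise_cons.mp hp).1 j hm)
      rcases List.mem_cons.mp hi with rfl | hiT
      · obtain ⟨k', hk'⟩ := NFL_push A i c T hp.of_cons ((List.pairwise_cons.mp hp).1) k
        refine ⟨Function.update k' i (k i + c), ?_⟩
        rw [NFL_cons, mul_assoc, hk', ← mul_assoc, ← zpow_add, NFL_cons, Function.update_self]
        congr 1
        exact NFL_congr fun x hx =>
          (Function.update_of_ne (fun hxj => hjT (by rwa [hxj] at hx)) _ _).symm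
      · obtain ⟨k', hk'⟩ := NFL_step A i c T hp.of_cons hiT k
        refine ⟨Function.update k' j (k j), ?_⟩
        rw [NFL_cons, mul_assoc, hk', NFL_cons, Function.update_self]
        congr 1
        exact NFL_congr fun x hx =>
          (Function.update_of_ne (fun hxj => hjT (by rwa [hxj] at hx)) _ _).symm

private lemma NF_mul_mk {n : ℕ} (A : Matrix (Fin n) (Fin n) (ZMod 2)) (w : FreeGroup (Fin n)) :
    ∀ k : Fin n → ℤ, ∃ k', NFL A (List.finRange n) k * PresentedGroup.mk (bottRels A) w
      = NFL A (List.finRange n) k' := by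
  induction w using FreeGroup.induction_on with
  | C1 => exact fun k => ⟨k, by rw [map_one, mul_one]⟩
  | of x =>
      intro k
      obtain ⟨k', hk'⟩ := NFL_step A x 1 (List.finRange n) (List.pairwise_lt_finRange n)
        (List.mem_finRange x) k
      exact ⟨k', by rw [← hk', zpow_one]; rfl⟩
  | inv_of x _ =>
      intro k
      obtain ⟨k', hk'⟩ := NFL_step A x (-1) (List.finRange n) (List.pairwise_lt_finRange n)
        (List.mem_finRange x) k
      exact ⟨k', by rw [← hk', zpow_neg_one, map_inv]; rfl⟩
  | mul x y ihx ihy =>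
      intro k
      obtain ⟨k1, hk1⟩ := ihx k
      obtain ⟨k2, hk2⟩ := ihy k1
      exact ⟨k2, by rw [map_mul, ← mul_assoc, hk1, hk2]⟩

private lemma NF_surj {n : ℕ} (A : Matrix (Fin n) (Fin n) (ZMod 2))
    (g : PresentedGroup (bottRels A)) : ∃ k, g = NFL A (List.finRange n) k := by
  induction g using PresentedGroup.induction_on with
  | _ w =>
      obtain ⟨k, hk⟩ := NF_mul_mk A w (fun _ => 0)
      exact ⟨k, by rw [← hk, NFL_zero, one_mul]⟩

private lemma bottMotion_apply {n : ℕ} (A : Matrix (Fin n) (Fin n) (ZMod 2)) (i : Fin n)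
    (u : Fin n → ℝ) (j : Fin n) :
    bottMotion A i u j = (-1 : ℝ) ^ (A i j).val * u j + if j = i then 2⁻¹ else 0 := rfl

private lemma bottMotion_inv_apply {n : ℕ} (A : Matrix (Fin n) (Fin n) (ZMod 2)) (i : Fin n)
    (u : Fin n → ℝ) (j : Fin n) :
    (bottMotion A i)⁻¹ u j = (-1 : ℝ) ^ (A i j).val * (u j - if j = i then 2⁻¹ else 0) := rfl

private lemma bottMotion_zpow {n : ℕ} (A : Matrix (Fin n) (Fin n) (ZMod 2))
    (hA : ∀ i j : Fin n, j ≤ i → A i j = 0) (m : Fin n) (c : ℤ) (u : Fin n → ℝ) :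
    (bottMotion A m ^ c) u = fun j =>
      ((-1 : ℝ) ^ (A m j).val) ^ c * u j + if j = m then (c : ℝ) / 2 else 0 := by
  have hmm : (A m m).val = 0 := by rw [hA m m le_rfl, ZMod.val_zero]
  have hne : ∀ j, ((-1 : ℝ) ^ (A m j).val) ≠ 0 := fun j => pow_ne_zero _ (by norm_num)
  have hsq : ∀ j, ((-1 : ℝ) ^ (A m j).val) * ((-1 : ℝ) ^ (A m j).val) = 1 := fun j => by
    rw [← pow_add]; exact Even.neg_one_pow ⟨(A m j).val, rfl⟩
  have hinv : ∀ j, ((-1 : ℝ) ^ (A m j).val)⁻¹ = (-1 : ℝ) ^ (A m j).val := fun j =>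
    inv_eq_of_mul_eq_one_right (hsq j)
  induction c using Int.induction_on generalizing u with
  | zero => funext j; simp
  | succ c ih =>
      rw [zpow_add_one, Equiv.Perm.mul_apply, ih]
      funext j
      rw [bottMotion_apply]
      by_cases hj : j = m
      · subst hj
        rw [if_pos rfl, if_pos rfl, if_pos rfl, hmm, pow_zero, one_zpow, one_zpow]
        push_cast
        ring
      · rw [if_neg hj, if_neg hj, if_neg hj, add_zero, add_zero, add_zero,
          ← mul_assoc, ← zpow_add_one₀ (hne j)]
  | pred c ih =>
      rw [zpow_sub_one, Equiv.Perm.mul_apply, ih]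
      funext j
      rw [bottMotion_inv_apply]
      by_cases hj : j = m
      · subst hj
        rw [if_pos rfl, if_pos rfl, if_pos rfl, hmm, pow_zero, one_zpow, one_zpow]
        push_cast
        ring
      · rw [if_neg hj, if_neg hj, if_neg hj, add_zero, sub_zero, add_zero, ← mul_assoc]
        congr 1
        rw [zpow_sub_one₀ (hne j), hinv j]

private lemma abs_neg_one_pow_zpow (v : ℕ) (c : ℤ) : |(((-1 : ℝ) ^ v) ^ c)| = 1 := by
  rcases Nat.even_or_odd v with h | h
  · rw [h.neg_one_pow, one_zpow, abs_one]
  · rw [h.neg_one_pow]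
    rcases Int.even_or_odd c with h2 | h2
    · rw [h2.neg_one_zpow, abs_one]
    · rw [h2.neg_one_zpow, abs_neg, abs_one]

private lemma bott_eval {n : ℕ} (A : Matrix (Fin n) (Fin n) (ZMod 2))
    (hA : ∀ i j : Fin n, j ≤ i → A i j = 0) :
    ∀ L : List (Fin n), List.Pairwise (· < ·) L → ∀ k : Fin n → ℤ,
      (∀ j ∈ L, |(((L.map fun j => bottMotion A j ^ k j).prod : Equiv.Perm (Fin n → ℝ))
          0 j)| = |(k j : ℝ)| / 2) ∧
      (∀ j ∉ L, ((L.map fun j => bottMotion A j ^ k j).prod : Equiv.Perm (Fin n → ℝ)) 0 j = 0)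
  | [], _, k => by
      constructor
      · intro j hj; exact absurd hj List.not_mem_nil
      · intro j _; simp
  | m :: T, hp, k => by
      obtain ⟨ih1, ih2⟩ := bott_eval A hA T hp.of_cons k
      have hmT : ∀ x ∈ T, m < x := (List.pairwise_cons.mp hp).1
      have hprod : ((m :: T).map fun j => bottMotion A j ^ k j).prod =
          bottMotion A m ^ k m * (T.map fun j => bottMotion A j ^ k j).prod := by
        simp
      have happ : ∀ j, (((m :: T).map fun j => bottMotion A j ^ k j).prod :
            Equiv.Perm (Fin n → ℝ)) 0 j =
          ((-1 : ℝ) ^ (A m j).val) ^ k m *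
            (((T.map fun j => bottMotion A j ^ k j).prod : Equiv.Perm (Fin n → ℝ)) 0 j) +
            if j = m then (k m : ℝ) / 2 else 0 := by
        intro j
        rw [hprod, Equiv.Perm.mul_apply, bottMotion_zpow A hA]
      constructor
      · intro j hj
        rcases List.mem_cons.mp hj with rfl | hjT
        · have hm' : j ∉ T := fun hm' => lt_irrefl j (hmT j hm')
          rw [happ, ih2 j hm', mul_zero, zero_add, if_pos rfl, abs_div]
          norm_num
        · have hjm : j ≠ m := fun hh => lt_irrefl m (hh ▸ hmT j hjT)
          rw [happ, if_neg hjm, add_zero, abs_mul, abs_neg_one_pow_zpow, one_mul, ih1 j hjT]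
      · intro j hj
        have hjm : j ≠ m := fun hh => hj (hh ▸ (List.mem_cons_self (a := m) (l := T)))
        have hjT : j ∉ T := fun hh => hj (List.mem_cons_of_mem m hh)
        rw [happ, if_neg hjm, add_zero, ih2 j hjT, mul_zero]

private lemma bott_rels_hold {n : ℕ} (A : Matrix (Fin n) (Fin n) (ZMod 2))
    (hA : ∀ i j : Fin n, j ≤ i → A i j = 0) :
    ∀ r ∈ bottRels A, FreeGroup.lift (bottMotion A) r = 1 := by
  rintro r ⟨i, ℓ, hlt, rfl⟩
  simp only [map_mul, map_inv, map_zpow, FreeGroup.lift_apply_of]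
  rw [mul_inv_eq_one]
  have hℓi : (A ℓ i).val = 0 := by rw [hA ℓ i hlt.le, ZMod.val_zero]
  have hii : (A i i).val = 0 := by rw [hA i i le_rfl, ZMod.val_zero]
  have hℓℓ : (A ℓ ℓ).val = 0 := by rw [hA ℓ ℓ le_rfl, ZMod.val_zero]
  have hne : i ≠ ℓ := hlt.ne
  have hv : (A i ℓ).val = 0 ∨ (A i ℓ).val = 1 := by have := ZMod.val_lt (A i ℓ); omega
  rcases hv with h0 | h1
  · rw [h0, pow_zero, Units.val_one, zpow_one]
    apply Equiv.ext
    intro u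
    funext j
    rw [Equiv.Perm.mul_apply, Equiv.Perm.mul_apply, bottMotion_apply, bottMotion_apply,
      bottMotion_apply, bottMotion_apply]
    by_cases hji : j = i
    · subst hji
      simp only [if_pos rfl, if_neg hne, hℓi, hii, pow_zero]
      ring
    · by_cases hjl : j = ℓ
      · subst hjl
        simp only [if_neg hji, if_pos rfl, h0, hℓℓ, pow_zero]
        ring
      · simp only [if_neg hji, if_neg hjl]
        ring
  · rw [h1, pow_one]
    have hcast : ((-(1 : ℤˣ) : ℤˣ) : ℤ) = -1 := rfl
    rw [hcast, zpow_neg_one]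
    apply Equiv.ext
    intro u
    funext j
    rw [Equiv.Perm.mul_apply, Equiv.Perm.mul_apply, bottMotion_apply, bottMotion_apply,
      bottMotion_apply, bottMotion_inv_apply]
    by_cases hji : j = i
    · subst hji
      simp only [if_pos rfl, if_neg hne, hℓi, hii, pow_zero]
      ring
    · by_cases hjl : j = ℓ
      · subst hjl
        simp only [if_neg hji, if_pos rfl, h1, hℓℓ, pow_zero, pow_one]
        ring
      · simp only [if_neg hji, if_neg hjl]
        ring

/-- the homomorphism ψ : 𝒢(A) → Γ(A) from the group presented by the
generators σ₁,…,σₙ and the relations σ_ℓσ_i = σ_iσ_ℓ^{(-1)^{A^i_ℓ}} (i < ℓ),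
determined by ψ(σ_j) = s_j, is a group isomorphism. -/
theorem bott_presented_group_iso {n : ℕ} (A : Matrix (Fin n) (Fin n) (ZMod 2))
    (hA : ∀ i j : Fin n, j ≤ i → A i j = 0) :
    ∃ ψ : PresentedGroup (bottRels A) ≃* bottGroup A,
      ∀ j : Fin n, ((ψ (PresentedGroup.of j) : bottGroup A) : Equiv.Perm (Fin n → ℝ)) =
        bottMotion A j := by
  have hrels := bott_rels_hold A hA
  set ψ₀ : PresentedGroup (bottRels A) →* Equiv.Perm (Fin n → ℝ) :=
    PresentedGroup.toGroup hrels with hψ₀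
  have hof : ∀ j : Fin n, ψ₀ (PresentedGroup.of j) = bottMotion A j := fun j =>
    PresentedGroup.toGroup.of hrels
  -- the range of ψ₀ is the Bott group
  have hrange : ψ₀.range = bottGroup A := by
    rw [MonoidHom.range_eq_map, ← PresentedGroup.closure_range_of (bottRels A),
      MonoidHom.map_closure]
    unfold bottGroup
    congr 1
    rw [← Set.range_comp]
    congr 1
  -- ψ₀ maps normal forms to products of powers of bottMotions
  have hmap : ∀ (L : List (Fin n)) (k : Fin n → ℤ),
      ψ₀ (NFL A L k) = (L.map fun j => bottMotion A j ^ k j).prod := by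
    intro L k
    induction L with
    | nil => rw [NFL_nil]; simp
    | cons j T ih =>
        rw [NFL_cons, map_mul, map_zpow, hof, ih, List.map_cons, List.prod_cons]
  -- ψ₀ is injective
  have hinj : Function.Injective ψ₀ := by
    rw [injective_iff_map_eq_one]
    intro g hg
    obtain ⟨k, rfl⟩ := NF_surj A g
    have hk : k = fun _ => 0 := by
      funext j
      have h1 := (bott_eval A hA (List.finRange n) (List.pairwise_lt_finRange n) k).1 j
        (List.mem_finRange j)
      rw [← hmap, hg] at h1
      simp only [Equiv.Perm.coe_one, id_eq, Pi.zero_apply, abs_zero] at h1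
      have : |(k j : ℝ)| = 0 := by linarith
      exact_mod_cast abs_eq_zero.mp this
    rw [hk, NFL_zero]
  have hmem : ∀ x, ψ₀ x ∈ bottGroup A := fun x => hrange ▸ ⟨x, rfl⟩
  set ψ₁ : PresentedGroup (bottRels A) →* bottGroup A :=
    ψ₀.codRestrict (bottGroup A) hmem with hψ₁
  have hbij : Function.Bijective ψ₁ := by
    constructor
    · intro a b hab
      exact hinj (congrArg Subtype.val hab)
    · rintro ⟨y, hy⟩
      rw [← hrange] at hy
      obtain ⟨x, hx⟩ := hy
      exact ⟨x, Subtype.ext hx⟩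
  refine ⟨MulEquiv.ofBijective ψ₁ hbij, fun j => ?_⟩
  show (ψ₁ (PresentedGroup.of j) : Equiv.Perm (Fin n → ℝ)) = bottMotion A j
  exact hof j
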